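/- Let φ : ℝ → H be an unpredictable function, where H is a bounded subset of ℝ^p, and let h : H → ℝ^q satisfy L₁ ‖u − ū‖ ≤ ‖h(u) − h(ū)‖ ≤ L₂ ‖u − ū‖ for all u, ū ∈ H with constants L₁, L₂ > 0. Then ψ(t) = h(φ(t)) is an unpredictable function. -/
import Mathlib


open Filter Topology

noncomputable def rhoK {m : ℕ} (h₁ h₂ : ℝ → (Fin m → ℝ)) (k : ℝ) : ℝ :=
  min 1 (sSup ((fun s => ‖h₁ s - h₂ s‖) '' Set.Icc (-k) k))

lemma sSup_norm_nonneg {m : ℕ} (f g : ℝ → Fin m → ℝ) (k : ℝ) :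
    0 ≤ sSup ((fun s => ‖f s - g s‖) '' Set.Icc (-k) k) := by
  rcases Set.eq_empty_or_nonempty (Set.Icc (-k) k) with he | hne
  · simp [he]
  by_cases hb : BddAbove ((fun s => ‖f s - g s‖) '' Set.Icc (-k) k)
  · obtain ⟨s, hs⟩ := hne
    exact le_trans (norm_nonneg _) (le_csSup hb ⟨s, hs, rfl⟩)
  · simp [Real.sSup_of_not_bddAbove hb]

lemma rhoK_nonneg {m : ℕ} (f g : ℝ → Fin m → ℝ) (k : ℝ) : 0 ≤ rhoK f g k :=
  le_min zero_le_one (sSup_norm_nonneg f g k)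

lemma min_one_le_aux (a b C : ℝ) (hb : 0 ≤ b) (hab : a ≤ C * b) :
    min 1 a ≤ max 1 C * min 1 b := by
  rcases le_or_gt b 1 with hb1 | hb1
  · rw [min_eq_right hb1]
    calc min 1 a ≤ a := min_le_right _ _
    _ ≤ C * b := hab
    _ ≤ max 1 C * b := by nlinarith [le_max_right 1 C]
  · rw [min_eq_left hb1.le]
    calc min 1 a ≤ 1 := min_le_left _ _
    _ ≤ max 1 C := le_max_left _ _
    _ = max 1 C * 1 := (mul_one _).symm

lemma rhoK_le_rhoK {m m' : ℕ} (f g : ℝ → Fin m → ℝ) (f' g' : ℝ → Fin m' → ℝ)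
    (C M : ℝ) (hC : 0 ≤ C)
    (hbdd : ∀ s, ‖f' s - g' s‖ ≤ M)
    (hle : ∀ s, ‖f s - g s‖ ≤ C * ‖f' s - g' s‖) (k : ℝ) (hk : 0 ≤ k) :
    rhoK f g k ≤ max 1 C * rhoK f' g' k := by
  have hmem : (0 : ℝ) ∈ Set.Icc (-k) k := ⟨neg_nonpos.mpr hk, hk⟩
  have hbdd' : BddAbove ((fun s => ‖f' s - g' s‖) '' Set.Icc (-k) k) :=
    ⟨M, by rintro x ⟨s, -, rfl⟩; exact hbdd s⟩
  set b := sSup ((fun s => ‖f' s - g' s‖) '' Set.Icc (-k) k) with hbdef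
  have hb0 : 0 ≤ b := sSup_norm_nonneg f' g' k
  have hab : sSup ((fun s => ‖f s - g s‖) '' Set.Icc (-k) k) ≤ C * b := by
    apply Real.sSup_le
    · rintro x ⟨s, hs, rfl⟩
      exact le_trans (hle s) (mul_le_mul_of_nonneg_left
        (le_csSup hbdd' ⟨s, hs, rfl⟩) hC)
    · exact mul_nonneg hC hb0
  exact min_one_le_aux _ _ _ hb0 hab

noncomputable def rho {m : ℕ} (h₁ h₂ : ℝ → (Fin m → ℝ)) : ℝ :=
  ∑' k : ℕ, (2 : ℝ)⁻¹ ^ (k + 1) * rhoK h₁ h₂ (k + 1)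

lemma summable_rho {m : ℕ} (f g : ℝ → Fin m → ℝ) :
    Summable (fun k : ℕ => (2 : ℝ)⁻¹ ^ (k + 1) * rhoK f g (k + 1)) := by
  apply Summable.of_nonneg_of_le
    (fun k => mul_nonneg (by positivity) (rhoK_nonneg _ _ _))
    (fun k => ?_)
    (summable_geometric_of_lt_one (by norm_num) (by norm_num : (2:ℝ)⁻¹ < 1) |>.mul_left 2⁻¹)
  · calc (2 : ℝ)⁻¹ ^ (k + 1) * rhoK f g (k + 1)
        ≤ (2 : ℝ)⁻¹ ^ (k + 1) * 1 :=
          mul_le_mul_of_nonneg_left (min_le_left _ _) (by positivity)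
    _ = 2⁻¹ * 2⁻¹ ^ k := by ring

lemma rho_nonneg {m : ℕ} (f g : ℝ → Fin m → ℝ) : 0 ≤ rho f g :=
  tsum_nonneg fun k => mul_nonneg (by positivity) (rhoK_nonneg _ _ _)

lemma rho_le_rho {m m' : ℕ} (f g : ℝ → Fin m → ℝ) (f' g' : ℝ → Fin m' → ℝ)
    (C M : ℝ) (hC : 0 ≤ C)
    (hbdd : ∀ s, ‖f' s - g' s‖ ≤ M)
    (hle : ∀ s, ‖f s - g s‖ ≤ C * ‖f' s - g' s‖) :
    rho f g ≤ max 1 C * rho f' g' := by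
  rw [rho, rho, ← tsum_mul_left]
  refine Summable.tsum_le_tsum (fun k => ?_) (summable_rho f g) ((summable_rho f' g').mul_left _)
  calc (2 : ℝ)⁻¹ ^ (k + 1) * rhoK f g (k + 1)
      ≤ (2 : ℝ)⁻¹ ^ (k + 1) * (max 1 C * rhoK f' g' (k + 1)) :=
        mul_le_mul_of_nonneg_left
          (rhoK_le_rhoK f g f' g' C M hC hbdd hle _ (by positivity)) (by positivity)
    _ = max 1 C * ((2 : ℝ)⁻¹ ^ (k + 1) * rhoK f' g' (k + 1)) := by ring

/-- A continuous function `φ : ℝ → ℝ^m` is unpredictable if there are `ε₀ > 0` and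
sequences `t_n, τ_n → ∞` with `ρ(φ(t_n + ·), φ) → 0` and
`ρ(φ(t_n + τ_n + ·), φ(τ_n + ·)) ≥ ε₀` for all `n`. -/
def IsUnpredictable {m : ℕ} (φ : ℝ → (Fin m → ℝ)) : Prop :=
  Continuous φ ∧ ∃ ε₀ > (0 : ℝ), ∃ t τ : ℕ → ℝ,
    Tendsto t atTop atTop ∧ Tendsto τ atTop atTop ∧
    Tendsto (fun n => rho (fun s => φ (t n + s)) φ) atTop (𝓝 0) ∧
    ∀ n, ε₀ ≤ rho (fun s => φ (t n + τ n + s)) (fun s => φ (τ n + s))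

/-- a bi-Lipschitz image of an unpredictable function is unpredictable. -/
theorem unpredictable_comp_biLipschitz {p q : ℕ}
    (H : Set (Fin p → ℝ)) (hH : Bornology.IsBounded H)
    (φ : ℝ → (Fin p → ℝ)) (hφH : ∀ t : ℝ, φ t ∈ H)
    (hφ : IsUnpredictable φ)
    (h : (Fin p → ℝ) → (Fin q → ℝ)) (L₁ L₂ : ℝ) (hL₁ : 0 < L₁) (hL₂ : 0 < L₂)
    (hbl : ∀ u ∈ H, ∀ v ∈ H, L₁ * ‖u - v‖ ≤ ‖h u - h v‖ ∧ ‖h u - h v‖ ≤ L₂ * ‖u - v‖) :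
    IsUnpredictable (fun t => h (φ t)) := by
  obtain ⟨hcont, ε₀, hε₀, t, τ, ht, hτ, hconv, hsep⟩ := hφ
  obtain ⟨R, hR⟩ := hH.exists_norm_le
  -- φ-differences are bounded
  have hφbdd : ∀ a b s : ℝ, ‖φ (a + s) - φ (b + s)‖ ≤ 2 * R := by
    intro a b s
    calc ‖φ (a + s) - φ (b + s)‖ ≤ ‖φ (a + s)‖ + ‖φ (b + s)‖ := norm_sub_le _ _
    _ ≤ R + R := add_le_add (hR _ (hφH _)) (hR _ (hφH _))
    _ = 2 * R := by ring
  -- ψ-differences are bounded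
  have hψbdd : ∀ a b s : ℝ, ‖h (φ (a + s)) - h (φ (b + s))‖ ≤ L₂ * (2 * R) := by
    intro a b s
    calc ‖h (φ (a + s)) - h (φ (b + s))‖ ≤ L₂ * ‖φ (a + s) - φ (b + s)‖ :=
      (hbl _ (hφH _) _ (hφH _)).2
    _ ≤ L₂ * (2 * R) := mul_le_mul_of_nonneg_left (hφbdd a b s) hL₂.le
  -- continuity of ψ
  have hψcont : Continuous (fun t => h (φ t)) := by
    have hlip : LipschitzOnWith L₂.toNNReal h H := by
      apply LipschitzOnWith.of_dist_le_mul
      intro x hx y hy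
      rw [Real.coe_toNNReal _ hL₂.le, dist_eq_norm, dist_eq_norm]
      exact (hbl x hx y hy).2
    exact hlip.continuousOn.comp_continuous hcont hφH
  refine ⟨hψcont, ε₀ / max 1 L₁⁻¹, ?_, t, τ, ht, hτ, ?_, ?_⟩
  · have : (0:ℝ) < max 1 L₁⁻¹ := lt_max_of_lt_left one_pos
    positivity
  · -- convergence
    apply squeeze_zero (fun n => rho_nonneg _ _) (g := fun n => max 1 L₂ * rho (fun s => φ (t n + s)) φ)
    · intro n
      refine rho_le_rho _ _ _ _ L₂ (2 * R) hL₂.le ?_ ?_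
      · intro s
        have := hφbdd (t n) 0 s
        simpa using this
      · intro s
        have := (hbl (φ (t n + s)) (hφH _) (φ s) (hφH _)).2
        simpa using this
    · simpa using hconv.const_mul (max 1 L₂)
  · -- separation
    intro n
    rw [div_le_iff₀ (lt_max_of_lt_left one_pos), mul_comm]
    calc ε₀ ≤ rho (fun s => φ (t n + τ n + s)) (fun s => φ (τ n + s)) := hsep n
    _ ≤ max 1 L₁⁻¹ * rho (fun s => h (φ (t n + τ n + s))) (fun s => h (φ (τ n + s))) := by
        refine rho_le_rho _ _ _ _ L₁⁻¹ (L₂ * (2 * R)) (by positivity) ?_ ?_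
        · intro s; exact hψbdd _ _ s
        · intro s
          rw [le_inv_mul_iff₀ hL₁]
          exact (hbl _ (hφH _) _ (hφH _)).1
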